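/- arXiv:2512.03193 — 2 statements merged into one kernel-verified Lean document; each statement's English description precedes it below -/
import Mathlib

section
/- Every real polynomial φ of degree at most d that is bounded by C on the interval [0,T] satisfies, for all k ∈ ℕ, the derivative bound sup_{t∈[0,T]} |φ^{(k)}(t)| ≤ C (2d²/T)^k. -/
open Polynomial Finset
noncomputable section

/-- `g` is a real trigonometric polynomial of degree ≤ n, encoded via
`g θ = exp(-inθ) * Q(exp(iθ))` with `Q` a complex polynomial of degree ≤ 2n. -/
def IsTP (n : ℕ) (g : ℝ → ℝ) : Prop :=
  ∃ Q : Polynomial ℂ, Q.natDegree ≤ 2 * n ∧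
    ∀ θ : ℝ, (g θ : ℂ) =
      Complex.exp (-((n : ℂ) * θ) * Complex.I) * Q.eval (Complex.exp (θ * Complex.I))

lemma IsTP.sub {n : ℕ} {g h : ℝ → ℝ} (hg : IsTP n g) (hh : IsTP n h) :
    IsTP n (fun θ => g θ - h θ) := by
  obtain ⟨Q, hQ, hQe⟩ := hg
  obtain ⟨R, hR, hRe⟩ := hh
  refine ⟨Q - R, le_trans (Polynomial.natDegree_sub_le _ _) (max_le hQ hR), fun θ => ?_⟩
  push_cast
  rw [hQe θ, hRe θ, Polynomial.eval_sub]
  ring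

lemma IsTP.neg {n : ℕ} {g : ℝ → ℝ} (hg : IsTP n g) : IsTP n (fun θ => -(g θ)) := by
  obtain ⟨Q, hQ, hQe⟩ := hg
  refine ⟨-Q, le_trans (Polynomial.natDegree_neg _).le hQ, fun θ => ?_⟩
  push_cast
  rw [hQe θ, Polynomial.eval_neg]
  ring

lemma cexp_mul_cos (θ : ℝ) :
    Complex.exp (θ * Complex.I) * (Real.cos θ : ℂ)
      = ((Complex.exp (θ * Complex.I)) ^ 2 + 1) / 2 := by
  rw [Complex.ofReal_cos, Complex.cos]
  have h1 : Complex.exp (θ * Complex.I) * Complex.exp (-θ * Complex.I) = 1 := by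
    rw [← Complex.exp_add]
    rw [show (θ : ℂ) * Complex.I + -θ * Complex.I = 0 by ring, Complex.exp_zero]
  calc Complex.exp (θ * Complex.I) *
        ((Complex.exp (θ * Complex.I) + Complex.exp (-θ * Complex.I)) / 2)
      = ((Complex.exp (θ * Complex.I)) ^ 2 +
          Complex.exp (θ * Complex.I) * Complex.exp (-θ * Complex.I)) / 2 := by ring
    _ = ((Complex.exp (θ * Complex.I)) ^ 2 + 1) / 2 := by rw [h1]

/-- `p(cos θ)` is a trig polynomial of degree `n` when `deg p ≤ n`. -/
lemma isTP_polyCos {n : ℕ} {p : Polynomial ℝ} (hp : p.natDegree ≤ n) :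
    IsTP n (fun θ => p.eval (Real.cos θ)) := by
  classical
  refine ⟨∑ m ∈ range (n + 1),
      C ((p.coeff m : ℂ)) * X ^ (n - m) * (C (2⁻¹ : ℂ) * (X ^ 2 + 1)) ^ m, ?_, ?_⟩
  · refine Polynomial.natDegree_sum_le_of_forall_le _ _ fun m hm => ?_
    have h1 : (C ((p.coeff m : ℂ)) * X ^ (n - m)).natDegree ≤ n - m := by
      refine le_trans (Polynomial.natDegree_mul_le) ?_
      simp [Polynomial.natDegree_X_pow]
    have h2 : ((C (2⁻¹ : ℂ) * (X ^ 2 + 1) : Polynomial ℂ) ^ m).natDegree ≤ m * 2 := by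
      refine le_trans (Polynomial.natDegree_pow_le) ?_
      have : ((C (2⁻¹ : ℂ)) * (X ^ 2 + 1) : Polynomial ℂ).natDegree ≤ 2 := by
        refine le_trans (Polynomial.natDegree_mul_le) ?_
        simp [Polynomial.natDegree_add_le, Polynomial.natDegree_X_pow]
        refine le_trans (Polynomial.natDegree_add_le _ _) ?_
        simp [Polynomial.natDegree_X_pow]
      exact le_trans (Nat.mul_le_mul_left m this) (le_of_eq rfl)
    refine le_trans (Polynomial.natDegree_mul_le) ?_
    have hmn : m ≤ n := Nat.lt_succ_iff.mp (mem_range.mp hm)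
    omega
  · intro θ
    set z := Complex.exp (θ * Complex.I) with hz
    have hz0 : z ≠ 0 := Complex.exp_ne_zero _
    have hev : ((p.eval (Real.cos θ) : ℝ) : ℂ)
        = ∑ m ∈ range (n + 1), (p.coeff m : ℂ) * (Real.cos θ : ℂ) ^ m := by
      have := Polynomial.eval_eq_sum_range' (Nat.lt_succ_of_le hp) (Real.cos θ)
      rw [this]
      push_cast
      ring
    rw [hev, Polynomial.eval_finset_sum, Finset.mul_sum]
    refine Finset.sum_congr rfl fun m hm => ?_
    have hmn : m ≤ n := Nat.lt_succ_iff.mp (mem_range.mp hm)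
    simp only [Polynomial.eval_mul, Polynomial.eval_pow, Polynomial.eval_C,
      Polynomial.eval_X, Polynomial.eval_add, Polynomial.eval_one]
    have hkey : (2⁻¹ : ℂ) * (z ^ 2 + 1) = z * (Real.cos θ : ℂ) := by
      rw [cexp_mul_cos θ]; ring
    rw [hkey, mul_pow]
    have : Complex.exp (-((n : ℂ) * θ) * Complex.I) * z ^ n = 1 := by
      rw [hz, ← Complex.exp_nat_mul, ← Complex.exp_add]
      rw [show -((n : ℂ) * θ) * Complex.I + (n : ℂ) * (θ * Complex.I) = 0 by ring]
      exact Complex.exp_zero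
    have hzn : z ^ (n - m) * z ^ m = z ^ n := by
      rw [← pow_add]; congr 1; omega
    symm
    calc Complex.exp (-((n : ℂ) * θ) * Complex.I) *
          ((p.coeff m : ℂ) * z ^ (n - m) * (z ^ m * (Real.cos θ : ℂ) ^ m))
        = (Complex.exp (-((n : ℂ) * θ) * Complex.I) * z ^ n) *
            ((p.coeff m : ℂ) * (Real.cos θ : ℂ) ^ m) := by rw [← hzn]; ring
      _ = (p.coeff m : ℂ) * (Real.cos θ : ℂ) ^ m := by rw [this, one_mul]

lemma cexp_mul_sin (θ : ℝ) :
    (Real.sin θ : ℂ) * Complex.exp (θ * Complex.I)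
      = ((Complex.exp (θ * Complex.I)) ^ 2 - 1) / (2 * Complex.I) := by
  have h1 : Complex.exp (θ * Complex.I) * Complex.exp (-(θ:ℂ) * Complex.I) = 1 := by
    rw [← Complex.exp_add]
    rw [show (θ : ℂ) * Complex.I + -(θ:ℂ) * Complex.I = 0 by ring, Complex.exp_zero]
  have hinv : ((2 * Complex.I):ℂ)⁻¹ = -Complex.I / 2 := by
    refine inv_eq_of_mul_eq_one_right ?_
    linear_combination -Complex.I_sq
  rw [Complex.ofReal_sin, Complex.sin, div_eq_mul_inv ((Complex.exp (θ * Complex.I)) ^ 2 - 1), hinv]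
  linear_combination (Complex.I/2) * h1

lemma IsTP.sinMul {m : ℕ} {h : ℝ → ℝ} (hh : IsTP m h) :
    IsTP (m + 1) (fun θ => Real.sin θ * h θ) := by
  obtain ⟨Q, hQ, hQe⟩ := hh
  refine ⟨C ((2 * Complex.I)⁻¹) * (X ^ 2 - 1) * Q, ?_, ?_⟩
  · refine le_trans (Polynomial.natDegree_mul_le) ?_
    have h1 : (C ((2 * Complex.I)⁻¹) * (X ^ 2 - 1) : Polynomial ℂ).natDegree ≤ 2 := by
      refine le_trans (Polynomial.natDegree_mul_le) ?_
      simp only [Polynomial.natDegree_C, zero_add]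
      refine le_trans (Polynomial.natDegree_sub_le _ _) ?_
      simp [Polynomial.natDegree_X_pow]
    omega
  · intro θ
    rw [show (((m+1:ℕ)) : ℂ) = (m:ℂ)+1 by push_cast; ring]
    set z := Complex.exp (θ * Complex.I) with hz
    have hsin : (Real.sin θ : ℂ) * z = (z ^ 2 - 1) / (2 * Complex.I) := cexp_mul_sin θ
    have hexp : Complex.exp (-(((m : ℂ) + 1) * θ) * Complex.I) * z
        = Complex.exp (-((m : ℂ) * θ) * Complex.I) := by
      rw [hz, ← Complex.exp_add]; congr 1; ring
    rw [Complex.ofReal_mul]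
    rw [Polynomial.eval_mul, Polynomial.eval_mul, Polynomial.eval_C,
      Polynomial.eval_sub, Polynomial.eval_pow, Polynomial.eval_X, Polynomial.eval_one]
    have hQz := hQe θ
    have hzI : (2 * Complex.I) ≠ 0 := by simp [Complex.I_ne_zero]
    have hz0 : z ≠ 0 := Complex.exp_ne_zero _
    calc (Real.sin θ : ℂ) * (h θ : ℂ)
        = ((Real.sin θ : ℂ) * z) * (Complex.exp (-((m : ℂ) * θ) * Complex.I) * Q.eval z) / z := by
          rw [← hQz]; field_simp
      _ = ((z ^ 2 - 1) / (2 * Complex.I)) * ((Complex.exp (-(((m:ℂ)+1) * θ) * Complex.I) * z) * Q.eval z) / z := by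
          rw [hsin, hexp]
      _ = Complex.exp (-(((m:ℂ)+1) * θ) * Complex.I) * ((2 * Complex.I)⁻¹ * (z ^ 2 - 1) * Q.eval z) := by
          field_simp

lemma isTP_sinLin (n : ℕ) (M φ : ℝ) :
    IsTP n (fun θ => M * Real.sin ((n : ℝ) * θ + φ)) := by
  refine ⟨C ((M : ℂ) * Complex.exp (φ * Complex.I) / (2 * Complex.I)) * X ^ (2 * n)
      - C ((M : ℂ) * Complex.exp (-φ * Complex.I) / (2 * Complex.I)), ?_, ?_⟩
  · refine le_trans (Polynomial.natDegree_sub_le _ _) ?_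
    refine max_le (le_trans (Polynomial.natDegree_mul_le) ?_) ?_
    · simp [Polynomial.natDegree_X_pow]
    · simp
  · intro θ
    set z := Complex.exp (θ * Complex.I) with hz
    rw [Polynomial.eval_sub, Polynomial.eval_mul, Polynomial.eval_C, Polynomial.eval_pow,
      Polynomial.eval_X, Polynomial.eval_C]
    have hE : Complex.exp (-((n:ℂ) * θ) * Complex.I) * (Complex.exp (φ * Complex.I) * z ^ (2*n))
        = Complex.exp (((n:ℂ) * θ + φ) * Complex.I) := by
      rw [hz, ← Complex.exp_nat_mul, ← Complex.exp_add, ← Complex.exp_add]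
      congr 1; push_cast; ring
    have hE' : Complex.exp (-((n:ℂ) * θ) * Complex.I) * Complex.exp (-φ * Complex.I)
        = Complex.exp (-(((n:ℂ) * θ + φ)) * Complex.I) := by
      rw [← Complex.exp_add]; congr 1; ring
    push_cast
    rw [Complex.sin]
    set E := Complex.exp (((n:ℂ) * θ + (φ:ℂ)) * Complex.I) with hEdef
    set E' := Complex.exp (-((n:ℂ) * θ + (φ:ℂ)) * Complex.I) with hE'def
    calc (M : ℂ) * ((E' - E) * Complex.I / 2)
        = ((M:ℂ) * E / (2 * Complex.I)) - ((M:ℂ) * E' / (2 * Complex.I)) := by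
          have h2I : (2 * Complex.I : ℂ) ≠ 0 := by simp [Complex.I_ne_zero]
          field_simp
          linear_combination ((M:ℂ)*E' - (M:ℂ)*E) * Complex.I_sq
      _ = Complex.exp (-((n:ℂ) * θ) * Complex.I) *
            ((M:ℂ) * Complex.exp (φ * Complex.I) / (2 * Complex.I) * z ^ (2 * n)
              - (M:ℂ) * Complex.exp (-φ * Complex.I) / (2 * Complex.I)) := by
          linear_combination (-(M:ℂ)/(2*Complex.I)) * hE + ((M:ℂ)/(2*Complex.I)) * hE'

lemma IsTP.false_of_zeros {n : ℕ} {h : ℝ → ℝ} (hh : IsTP n h) {N : ℕ} (hN : 2 * n < N)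
    (w : ℕ → ℝ) (hmono : ∀ i j, i < j → j < N → w i < w j) (c : ℝ)
    (hwin : ∀ i, i < N → w i ∈ Set.Ico c (c + 2 * Real.pi))
    (hzero : ∀ i, i < N → h (w i) = 0) {θ₁ : ℝ} (hne : h θ₁ ≠ 0) : False := by
  classical
  obtain ⟨Q, hQ, hQe⟩ := hh
  have hQ0 : Q ≠ 0 := by
    intro h0
    apply hne
    have := hQe θ₁
    rw [h0] at this
    simpa using this
  have hroot : ∀ i, i < N → Q.eval (Complex.exp (w i * Complex.I)) = 0 := by
    intro i hi
    have h1 := hQe (w i)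
    rw [hzero i hi] at h1
    have hexp : Complex.exp (-((n : ℂ) * (w i)) * Complex.I) ≠ 0 := Complex.exp_ne_zero _
    have := (mul_eq_zero.mp h1.symm)
    rcases this with h2 | h2
    · exact absurd h2 hexp
    · exact h2
  have hww : ∀ i j, i < N → j < N → w i = w j → i = j := by
    intro i j hi hj hwij
    rcases lt_trichotomy i j with hij | hij | hij
    · exact absurd hwij (ne_of_lt (hmono i j hij hj))
    · exact hij
    · exact absurd hwij.symm (ne_of_lt (hmono j i hij hi))
  have hinj : Set.InjOn (fun i : ℕ => Complex.exp (w i * Complex.I)) ↑(Finset.range N) := by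
    intro i hi j hj hxy
    simp only [Finset.coe_range, Set.mem_Iio] at hi hj
    obtain ⟨k, hk⟩ := Complex.exp_eq_exp_iff_exists_int.mp hxy
    have hk2 : ((w i : ℂ)) * Complex.I = ((w j + k * (2 * Real.pi) : ℝ) : ℂ) * Complex.I := by
      rw [hk]; push_cast; ring
    have hk3 : (w i : ℂ) = ((w j + k * (2 * Real.pi) : ℝ) : ℂ) :=
      mul_right_cancel₀ Complex.I_ne_zero hk2
    have hk4 : w i = w j + k * (2 * Real.pi) := by exact_mod_cast hk3
    have hwi := hwin i hi
    have hwj := hwin j hj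
    have hpi : (0:ℝ) < 2 * Real.pi := by positivity
    have hdiff : |w i - w j| < 2 * Real.pi := by
      rw [abs_lt]
      constructor <;> [nlinarith [hwi.1, hwi.2, hwj.1, hwj.2]; nlinarith [hwi.1, hwi.2, hwj.1, hwj.2]]
    have hk0 : k = 0 := by
      by_contra hk0
      have : (1:ℝ) ≤ |(k:ℝ)| := by
        rcases lt_or_gt_of_ne hk0 with hlt | hgt
        · rw [abs_of_neg (by exact_mod_cast hlt)]
          have : (k:ℝ) ≤ -1 := by exact_mod_cast Int.le_sub_one_of_lt hlt
          linarith
        · rw [abs_of_pos (by exact_mod_cast hgt)]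
          exact_mod_cast hgt
      have : 2 * Real.pi ≤ |w i - w j| := by
        rw [hk4, show w j + (k:ℝ) * (2*Real.pi) - w j = (k:ℝ)*(2*Real.pi) by ring,
          abs_mul, abs_of_pos hpi]
        nlinarith
      linarith
    apply hww i j hi hj
    rw [hk4, hk0]
    push_cast; ring
  have hcard : (Finset.range N).card ≤ Q.roots.toFinset.card := by
    apply Finset.card_le_card_of_injOn (fun i => Complex.exp (w i * Complex.I))
    · intro i hi
      rw [Finset.mem_coe, Multiset.mem_toFinset, Polynomial.mem_roots hQ0]
      exact hroot i (Finset.mem_range.mp (Finset.mem_coe.mp hi))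
    · exact hinj
  have : N ≤ 2 * n := by
    calc N = (Finset.range N).card := (Finset.card_range N).symm
      _ ≤ Q.roots.toFinset.card := hcard
      _ ≤ Multiset.card Q.roots := Multiset.toFinset_card_le _
      _ ≤ Q.natDegree := Polynomial.card_roots' Q
      _ ≤ 2 * n := hQ
  omega

lemma succ_mono_aux {N : ℕ} {w : ℕ → ℝ} (h : ∀ i, i + 1 < N → w i < w (i + 1)) :
    ∀ i j, i < j → j < N → w i < w j := by
  intro i j hij hjN
  induction j with
  | zero => omega
  | succ j ih =>
    rcases Nat.lt_succ_iff_lt_or_eq.mp hij with hij' | rfl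
    · exact lt_trans (ih hij' (by omega)) (h j (by omega))
    · exact h i (by omega)

set_option maxHeartbeats 1000000 in
lemma szego_aux (n : ℕ) (hn : 1 ≤ n) (g g₁ : ℝ → ℝ) (hg : IsTP n g)
    (hd : ∀ θ, HasDerivAt g (g₁ θ) θ) (M : ℝ) (hM : ∀ θ, |g θ| < M) (θ0 : ℝ)
    (hpos : 0 < g₁ θ0) (hcon : (n : ℝ) ^ 2 * (M ^ 2 - g θ0 ^ 2) < g₁ θ0 ^ 2) : False := by
  have hM0 : 0 < M := lt_of_le_of_lt (abs_nonneg _) (hM θ0)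
  have hnR : (0:ℝ) < n := by exact_mod_cast hn
  have hgabs := abs_lt.mp (hM θ0)
  have hg1 : -1 ≤ g θ0 / M := by rw [le_div_iff₀ hM0]; linarith
  have hg2 : g θ0 / M ≤ 1 := by rw [div_le_iff₀ hM0]; linarith
  set β := Real.arcsin (g θ0 / M) with hβdef
  have hβ1 : -(Real.pi/2) < β := Real.neg_pi_div_two_lt_arcsin.mpr (by rw [lt_div_iff₀ hM0]; linarith)
  have hβ2 : β < Real.pi/2 := Real.arcsin_lt_pi_div_two.mpr (by rw [div_lt_iff₀ hM0]; linarith)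
  have hsinβ : Real.sin β = g θ0 / M := Real.sin_arcsin hg1 hg2
  have hcosβ : 0 < Real.cos β := Real.cos_pos_of_mem_Ioo ⟨hβ1, hβ2⟩
  set φ := β - (n:ℝ) * θ0 with hφdef
  set s : ℝ → ℝ := fun θ => M * Real.sin ((n : ℝ) * θ + φ) with hsdef
  set s₁ : ℝ → ℝ := fun θ => M * (Real.cos ((n : ℝ) * θ + φ) * n) with hs₁def
  have hTPs : IsTP n s := isTP_sinLin n M φ
  have hds : ∀ θ, HasDerivAt s (s₁ θ) θ := by
    intro θ
    have h1 : HasDerivAt (fun θ : ℝ => (n : ℝ) * θ + φ) n θ := by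
      simpa using ((hasDerivAt_id θ).const_mul (n:ℝ)).add_const φ
    exact ((Real.hasDerivAt_sin _).comp θ h1).const_mul M
  have hsθ0 : s θ0 = g θ0 := by
    simp only [hsdef]
    rw [show (n:ℝ) * θ0 + φ = β by rw [hφdef]; ring, hsinβ]
    field_simp
  have hs₁θ0 : s₁ θ0 = M * (Real.cos β * n) := by
    simp only [hs₁def]
    rw [show (n:ℝ) * θ0 + φ = β by rw [hφdef]; ring]
  have hcos2 : Real.cos β ^ 2 = 1 - (g θ0 / M) ^ 2 := by
    have := Real.sin_sq_add_cos_sq β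
    rw [hsinβ] at this; linarith
  have hsq : s₁ θ0 ^ 2 = (n:ℝ)^2 * (M^2 - g θ0 ^ 2) := by
    rw [hs₁θ0, mul_pow, mul_pow, hcos2]
    field_simp
  have hlt : s₁ θ0 < g₁ θ0 := by
    have hs₁0 : 0 ≤ s₁ θ0 := by
      rw [hs₁θ0]; positivity
    nlinarith [hsq, hcon, hpos]
  set h : ℝ → ℝ := fun θ => g θ - s θ with hhdef
  set h₁ : ℝ → ℝ := fun θ => g₁ θ - s₁ θ with hh₁def
  have hdh : ∀ θ, HasDerivAt h (h₁ θ) θ := fun θ => (hd θ).sub (hds θ)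
  have hcont : Continuous h := by
    have : Differentiable ℝ h := fun θ => (hdh θ).differentiableAt
    exact this.continuous
  have hh0 : h θ0 = 0 := by simp [hhdef, hsθ0]
  have hh1 : 0 < h₁ θ0 := by simp only [hh₁def]; linarith
  set τ : ℕ → ℝ := fun j => θ0 + ((j : ℝ) * Real.pi - Real.pi/2 - β) / n with hτdef
  have hτlt : ∀ j k : ℕ, j < k → τ j < τ k := by
    intro j k hjk
    simp only [hτdef]
    have hjkR : (j:ℝ) < k := by exact_mod_cast hjk
    have : (j:ℝ) * Real.pi < (k:ℝ) * Real.pi := by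
      exact mul_lt_mul_of_pos_right hjkR Real.pi_pos
    gcongr
  have hτle : ∀ j k : ℕ, j ≤ k → τ j ≤ τ k := by
    intro j k hjk
    rcases Nat.lt_or_ge j k with hlt2 | hge
    · exact (hτlt j k hlt2).le
    · have : j = k := le_antisymm hjk hge
      rw [this]
  have hsτ : ∀ j : ℕ, s (τ j) = -M * (-1:ℝ)^j := by
    intro j
    simp only [hsdef, hτdef, hφdef]
    have harg : (n:ℝ) * (θ0 + ((j : ℝ) * Real.pi - Real.pi/2 - β) / n) + (β - (n:ℝ)*θ0)
        = (j:ℝ) * Real.pi - Real.pi/2 := by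
      field_simp
      ring
    rw [harg]
    rw [show (j:ℝ) * Real.pi - Real.pi/2 = -(Real.pi/2 - (j:ℝ)*Real.pi) by ring, Real.sin_neg]
    rw [Real.sin_pi_div_two_sub]
    rw [show (j:ℝ) * Real.pi = 0 + (j:ℝ)*Real.pi by ring, Real.cos_add_nat_mul_pi]
    simp
  have hhτ : ∀ j : ℕ, (Even j → 0 < h (τ j)) ∧ (Odd j → h (τ j) < 0) := by
    intro j
    have habs := abs_lt.mp (hM (τ j))
    have e1 : h (τ j) = g (τ j) - s (τ j) := rfl
    constructor
    · intro hj
      have h2 : ((-1:ℝ))^j = 1 := Even.neg_one_pow hj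
      rw [e1, hsτ j, h2]
      nlinarith [habs.1, habs.2]
    · intro hj
      have h2 : ((-1:ℝ))^j = -1 := Odd.neg_one_pow hj
      rw [e1, hsτ j, h2]
      nlinarith [habs.1, habs.2]
  have hτ0 : τ 0 < θ0 := by
    simp only [hτdef]
    have : ((0:ℕ):ℝ) * Real.pi - Real.pi/2 - β < 0 := by push_cast; linarith
    have h2 := div_neg_of_neg_of_pos this hnR
    linarith
  have hτ1 : θ0 < τ 1 := by
    simp only [hτdef]
    have : (0:ℝ) < ((1:ℕ):ℝ) * Real.pi - Real.pi/2 - β := by push_cast; linarith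
    have h2 := div_pos this hnR
    linarith
  -- points a (left) and b (right) near θ0 where h is negative / positive
  have hslope := hasDerivAt_iff_tendsto_slope.mp (hdh θ0)
  have hev : ∀ᶠ x in nhdsWithin θ0 {θ0}ᶜ, 0 < slope h θ0 x :=
    hslope.eventually (lt_mem_nhds hh1)
  have hsub_r : nhdsWithin θ0 (Set.Ioi θ0) ≤ nhdsWithin θ0 {θ0}ᶜ :=
    nhdsWithin_mono θ0 (fun x hx => ne_of_gt hx)
  have hsub_l : nhdsWithin θ0 (Set.Iio θ0) ≤ nhdsWithin θ0 {θ0}ᶜ :=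
    nhdsWithin_mono θ0 (fun x hx => ne_of_lt hx)
  obtain ⟨b, hbslope, hbmem⟩ :=
    ((hev.filter_mono hsub_r).and
      (Filter.eventually_mem_set.mpr (Ioo_mem_nhdsGT_of_mem ⟨le_refl θ0, hτ1⟩))).exists
  obtain ⟨a, haslope, hamem⟩ :=
    ((hev.filter_mono hsub_l).and
      (Filter.eventually_mem_set.mpr (Ioo_mem_nhdsLT_of_mem ⟨hτ0, le_refl θ0⟩))).exists
  have hbpos : 0 < h b := by
    have hbne : b - θ0 ≠ 0 := sub_ne_zero.mpr (ne_of_gt hbmem.1)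
    have heq : h b - h θ0 = slope h θ0 b * (b - θ0) := by
      rw [slope_def_field]; field_simp
    have := mul_pos hbslope (sub_pos.mpr hbmem.1)
    rw [← heq] at this
    linarith [hh0]
  have haneg : h a < 0 := by
    have hane : a - θ0 ≠ 0 := sub_ne_zero.mpr (ne_of_lt hamem.2)
    have heq : h a - h θ0 = slope h θ0 a * (a - θ0) := by
      rw [slope_def_field]; field_simp
    have := mul_neg_of_pos_of_neg haslope (sub_neg.mpr hamem.2)
    rw [← heq] at this
    linarith [hh0]
  -- interior zeros between consecutive τ's
  have hz : ∀ j : ℕ, ∃ x ∈ Set.Ioo (τ j) (τ (j+1)), h x = 0 := by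
    intro j
    have hle : τ j ≤ τ (j+1) := (hτlt j (j+1) (Nat.lt_succ_self j)).le
    rcases Nat.even_or_odd j with hj | hj
    · have h1 : 0 < h (τ j) := (hhτ j).1 hj
      have h2 : h (τ (j+1)) < 0 := (hhτ (j+1)).2 (Even.add_one hj)
      have := intermediate_value_Ioo' hle hcont.continuousOn (a := τ j) (b := τ (j+1))
        (f := h) ⟨h2, h1⟩
      obtain ⟨x, hx, hx0⟩ := this
      exact ⟨x, hx, hx0⟩
    · have h1 : h (τ j) < 0 := (hhτ j).2 hj
      have h2 : 0 < h (τ (j+1)) := (hhτ (j+1)).1 (Odd.add_one hj)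
      obtain ⟨x, hx, hx0⟩ := intermediate_value_Ioo hle hcont.continuousOn
        (a := τ j) (b := τ (j+1)) (f := h) ⟨h1, h2⟩
      exact ⟨x, hx, hx0⟩
  -- zero u₁ ∈ (τ 0, a), zero u₃ ∈ (b, τ 1)
  have hu1 : ∃ x ∈ Set.Ioo (τ 0) a, h x = 0 := by
    have h1 : 0 < h (τ 0) := (hhτ 0).1 (Even.zero)
    obtain ⟨x, hx, hx0⟩ := intermediate_value_Ioo' hamem.1.le hcont.continuousOn
      (a := τ 0) (b := a) (f := h) ⟨haneg, h1⟩
    exact ⟨x, hx, hx0⟩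
  have hu3 : ∃ x ∈ Set.Ioo b (τ 1), h x = 0 := by
    have h1 : h (τ 1) < 0 := (hhτ 1).2 (odd_one)
    obtain ⟨x, hx, hx0⟩ := intermediate_value_Ioo' hbmem.2.le hcont.continuousOn
      (a := b) (b := τ 1) (f := h) ⟨h1, hbpos⟩
    exact ⟨x, hx, hx0⟩
  obtain ⟨u₁, hu1mem, hu1z⟩ := hu1
  obtain ⟨u₃, hu3mem, hu3z⟩ := hu3
  classical
  set Z : ℕ → ℝ := fun j => Classical.choose (hz j) with hZdef
  have hZspec : ∀ j, Z j ∈ Set.Ioo (τ j) (τ (j+1)) ∧ h (Z j) = 0 := by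
    intro j
    obtain ⟨hmem, hzero⟩ := Classical.choose_spec (hz j)
    exact ⟨hmem, hzero⟩
  set N : ℕ := 2 * n + 2 with hNdef
  set w : ℕ → ℝ := fun i => if i = 0 then u₁ else if i = 1 then θ0 else if i = 2 then u₃
    else Z (i - 2) with hwdef
  have hw0 : w 0 = u₁ := rfl
  have hw1 : w 1 = θ0 := rfl
  have hw2 : w 2 = u₃ := rfl
  have hwge : ∀ i, 3 ≤ i → w i = Z (i - 2) := by
    intro i hi
    simp only [hwdef]
    rw [if_neg (by omega), if_neg (by omega), if_neg (by omega)]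
  have hsucc : ∀ i, i + 1 < N → w i < w (i + 1) := by
    intro i hi
    match i with
    | 0 =>
      rw [hw0, hw1]
      exact lt_trans hu1mem.2 hamem.2
    | 1 =>
      rw [hw1, hw2]
      exact lt_trans hbmem.1 hu3mem.1
    | 2 =>
      rw [hw2, hwge 3 (le_refl 3)]
      exact lt_trans hu3mem.2 ((hZspec 1).1).1
    | (m + 3) =>
      rw [hwge (m+3) (by omega), hwge (m+4) (by omega)]
      have h1 : Z (m+1) < τ (m+2) := ((hZspec (m+1)).1).2
      have h2 : τ (m+2) < Z (m+2) := ((hZspec (m+2)).1).1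
      exact lt_trans h1 h2
  have hmono := succ_mono_aux hsucc
  have hτwin : τ 0 + 2 * Real.pi = τ (2 * n) := by
    simp only [hτdef]
    push_cast
    field_simp
    ring
  have hwin : ∀ i, i < N → w i ∈ Set.Ico (τ 0) (τ 0 + 2 * Real.pi) := by
    intro i hi
    constructor
    · rcases Nat.eq_zero_or_pos i with rfl | hipos
      · rw [hw0]; exact hu1mem.1.le
      · have : w 0 < w i := hmono 0 i hipos hi
        rw [hw0] at this
        linarith [hu1mem.1]
    · rw [hτwin]
      have hlast : w i ≤ w (N - 1) := by
        rcases Nat.lt_or_ge i (N-1) with hlt2 | hge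
        · exact (hmono i (N-1) hlt2 (by omega)).le
        · have : i = N - 1 := by omega
          rw [this]
      refine lt_of_le_of_lt hlast ?_
      rw [hwge (N-1) (by omega)]
      have : N - 1 - 2 = 2*n - 1 := by omega
      rw [this]
      have h1 : Z (2*n-1) < τ (2*n-1+1) := ((hZspec (2*n-1)).1).2
      have h2 : (2*n-1+1) = 2*n := by omega
      rw [h2] at h1
      exact h1
  have hwzero : ∀ i, i < N → h (w i) = 0 := by
    intro i hi
    match i with
    | 0 => rw [hw0]; exact hu1z
    | 1 => rw [hw1]; exact hh0
    | 2 => rw [hw2]; exact hu3z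
    | (m+3) =>
      rw [hwge (m+3) (by omega)]
      exact (hZspec (m+1)).2
  have hTPh : IsTP n h := hg.sub hTPs
  have hneq : h (τ 1) ≠ 0 := ne_of_lt ((hhτ 1).2 odd_one)
  exact hTPh.false_of_zeros (by omega) w hmono (τ 0) hwin hwzero hneq

lemma szego_strict (n : ℕ) (hn : 1 ≤ n) (g g₁ : ℝ → ℝ) (hg : IsTP n g)
    (hd : ∀ θ, HasDerivAt g (g₁ θ) θ) (M : ℝ) (hM : ∀ θ, |g θ| < M) (θ0 : ℝ) :
    g₁ θ0 ^ 2 + (n : ℝ) ^ 2 * g θ0 ^ 2 ≤ (n : ℝ) ^ 2 * M ^ 2 := by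
  by_contra hcon
  push_neg at hcon
  have hcon' : (n : ℝ) ^ 2 * (M ^ 2 - g θ0 ^ 2) < g₁ θ0 ^ 2 := by nlinarith
  have habs := abs_lt.mp (hM θ0)
  have hn0 : (0:ℝ) < (n:ℝ) := by exact_mod_cast hn
  rcases lt_trichotomy (g₁ θ0) 0 with hneg | hzero | hpos
  · refine szego_aux n hn (fun θ => -(g θ)) (fun θ => -(g₁ θ)) hg.neg
      (fun θ => (hd θ).neg) M (fun θ => by simpa using hM θ) θ0 (by simpa using hneg) ?_
    simpa using hcon'
  · rw [hzero] at hcon'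
    have hMg : g θ0 ^ 2 < M ^ 2 := by nlinarith
    nlinarith [mul_pos (pow_pos hn0 2) (sub_pos.mpr hMg)]
  · exact szego_aux n hn g g₁ hg hd M hM θ0 hpos hcon'

lemma szego (n : ℕ) (hn : 1 ≤ n) (g g₁ : ℝ → ℝ) (hg : IsTP n g)
    (hd : ∀ θ, HasDerivAt g (g₁ θ) θ) (M : ℝ) (hM : ∀ θ, |g θ| ≤ M) (θ0 : ℝ) :
    g₁ θ0 ^ 2 + (n : ℝ) ^ 2 * g θ0 ^ 2 ≤ (n : ℝ) ^ 2 * M ^ 2 := by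
  have key : ∀ ε : ℝ, 0 < ε →
      g₁ θ0 ^ 2 + (n : ℝ) ^ 2 * g θ0 ^ 2 ≤ (n : ℝ) ^ 2 * (M + ε) ^ 2 := by
    intro ε hε
    exact szego_strict n hn g g₁ hg hd (M + ε)
      (fun θ => lt_of_le_of_lt (hM θ) (by linarith)) θ0
  have T : Filter.Tendsto (fun ε : ℝ => (n : ℝ) ^ 2 * (M + ε) ^ 2)
      (nhdsWithin 0 (Set.Ioi 0)) (nhds ((n : ℝ) ^ 2 * M ^ 2)) := by
    have hc : Continuous (fun ε : ℝ => (n : ℝ) ^ 2 * (M + ε) ^ 2) := by continuity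
    have h0 := hc.tendsto 0
    simp only [add_zero] at h0
    exact tendsto_nhdsWithin_of_tendsto_nhds h0
  exact ge_of_tendsto T (by
    filter_upwards [self_mem_nhdsWithin] with ε hε
    exact key ε hε)

/-- **Markov's inequality** on `[-1, 1]`. -/
lemma markov_neg_one_one (n : ℕ) (hn : 1 ≤ n) (p : Polynomial ℝ) (hdeg : p.natDegree ≤ n)
    (C : ℝ) (hb : ∀ x ∈ Set.Icc (-1 : ℝ) 1, |p.eval x| ≤ C) :
    ∀ x ∈ Set.Icc (-1 : ℝ) 1, |(Polynomial.derivative p).eval x| ≤ (n : ℝ) ^ 2 * C := by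
  have hC0 : 0 ≤ C := le_trans (abs_nonneg _) (hb 0 (by norm_num))
  have hn0 : (0:ℝ) < (n:ℝ) := by exact_mod_cast hn
  have hn1 : (1:ℝ) ≤ (n:ℝ) := by exact_mod_cast hn
  have hn2 : (1:ℝ) ≤ (n:ℝ)^2 := by nlinarith
  set q := Polynomial.derivative p with hqdef
  set g : ℝ → ℝ := fun θ => p.eval (Real.cos θ) with hgdef
  set g₁ : ℝ → ℝ := fun θ => q.eval (Real.cos θ) * (-Real.sin θ) with hg₁def
  have hdg : ∀ θ, HasDerivAt g (g₁ θ) θ :=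
    fun θ => (p.hasDerivAt (Real.cos θ)).comp θ (Real.hasDerivAt_cos θ)
  have hgb : ∀ θ, |g θ| ≤ C :=
    fun θ => hb _ ⟨Real.neg_one_le_cos θ, Real.cos_le_one θ⟩
  have hSz1 := szego n hn g g₁ (isTP_polyCos hdeg) hdg C hgb
  have hqdeg : q.natDegree ≤ n - 1 :=
    le_trans (Polynomial.natDegree_derivative_le p) (by omega)
  set F : ℝ → ℝ := fun θ => Real.sin θ * q.eval (Real.cos θ) with hFdef
  have hTF : IsTP n F := by
    have := (isTP_polyCos hqdeg).sinMul
    rwa [show (n-1)+1 = n by omega] at this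
  set h : ℝ → ℝ := fun θ => q.eval (Real.cos θ) with hhdef
  set h₁ : ℝ → ℝ := fun θ => (Polynomial.derivative q).eval (Real.cos θ) * (-Real.sin θ)
    with hh₁def
  have hdh : ∀ θ, HasDerivAt h (h₁ θ) θ :=
    fun θ => (q.hasDerivAt (Real.cos θ)).comp θ (Real.hasDerivAt_cos θ)
  set F₁ : ℝ → ℝ := fun θ => Real.cos θ * h θ + Real.sin θ * h₁ θ with hF₁def
  have hdF : ∀ θ, HasDerivAt F (F₁ θ) θ :=
    fun θ => (Real.hasDerivAt_sin θ).mul (hdh θ)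
  have hFb : ∀ θ, |F θ| ≤ (n:ℝ) * C := by
    intro θ
    have h1 := hSz1 θ
    have hFg : F θ = -g₁ θ := by
      simp only [hFdef, hg₁def]
      ring
    rw [hFg, abs_neg, abs_le]
    constructor <;> nlinarith [sq_nonneg (g θ), mul_nonneg hn0.le hC0,
      sq_nonneg (g₁ θ + (n:ℝ)*C), sq_nonneg (g₁ θ - (n:ℝ)*C)]
  have hSz2 := szego n hn F F₁ hTF hdF ((n:ℝ) * C) hFb
  obtain ⟨θs, hθs, hmax⟩ := (isCompact_Icc (a := (0:ℝ)) (b := Real.pi)).exists_isMaxOn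
    ⟨0, Set.mem_Icc.mpr ⟨le_refl 0, Real.pi_pos.le⟩⟩
    ((q.continuous.comp Real.continuous_cos).abs.continuousOn
      (s := Set.Icc (0:ℝ) Real.pi))
  have hglobal : ∀ θ : ℝ, |h θ| ≤ |h θs| := by
    intro θ
    have h1 : Real.arccos (Real.cos θ) ∈ Set.Icc (0:ℝ) Real.pi :=
      ⟨Real.arccos_nonneg _, Real.arccos_le_pi _⟩
    have h2 : h (Real.arccos (Real.cos θ)) = h θ := by
      simp only [hhdef]
      rw [Real.cos_arccos (Real.neg_one_le_cos θ) (Real.cos_le_one θ)]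
    have h3 := (isMaxOn_iff.mp hmax) _ h1
    simp only [Function.comp] at h3
    rw [Real.cos_arccos (Real.neg_one_le_cos θ) (Real.cos_le_one θ)] at h3
    exact h3
  have hcrit : h₁ θs = 0 := by
    rcases le_or_gt 0 (h θs) with hsign | hsign
    · have hloc : IsLocalMax h θs := Filter.Eventually.of_forall fun θ => by
        have := hglobal θ
        rw [abs_of_nonneg hsign] at this
        exact le_trans (le_abs_self _) this
      exact hloc.hasDerivAt_eq_zero (hdh θs)
    · have hloc : IsLocalMin h θs := Filter.Eventually.of_forall fun θ => by
        have h4 := hglobal θ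
        rw [abs_of_neg hsign] at h4
        nlinarith [neg_abs_le (h θ), hglobal θ]
      exact hloc.hasDerivAt_eq_zero (hdh θs)
  have hkey := hSz2 θs
  have hF₁θs : F₁ θs = Real.cos θs * h θs := by
    simp only [hF₁def, hcrit]
    ring
  have hFθs : F θs = Real.sin θs * h θs := rfl
  rw [hF₁θs, hFθs] at hkey
  have hpyth := Real.sin_sq_add_cos_sq θs
  have hhb : (h θs)^2 ≤ ((n:ℝ)^2*C)^2 := by nlinarith [sq_nonneg (Real.sin θs * h θs), sq_nonneg (h θs)]
  have habsb : |h θs| ≤ (n:ℝ)^2*C := by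
    have hb0 : (0:ℝ) ≤ (n:ℝ)^2*C := by positivity
    nlinarith [sq_abs (h θs), abs_nonneg (h θs)]
  intro x hx
  have h2 : h (Real.arccos x) = q.eval x := by
    simp only [hhdef]
    rw [Real.cos_arccos hx.1 hx.2]
  calc |q.eval x| = |h (Real.arccos x)| := by rw [h2]
    _ ≤ |h θs| := hglobal _
    _ ≤ (n:ℝ)^2*C := habsb

lemma markov_step (p : Polynomial ℝ) (d : ℕ) (T C : ℝ) (hT : 0 < T) (hC : 0 ≤ C)
    (hdeg : p.natDegree ≤ d) (hb : ∀ t ∈ Set.Icc (0 : ℝ) T, |p.eval t| ≤ C) :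
    ∀ t ∈ Set.Icc (0 : ℝ) T, |(Polynomial.derivative p).eval t| ≤ 2 * (d : ℝ) ^ 2 / T * C := by
  rcases Nat.eq_zero_or_pos d with rfl | hd
  · have h0 : p.natDegree = 0 := le_antisymm hdeg (Nat.zero_le _)
    obtain ⟨a, ha⟩ := Polynomial.natDegree_eq_zero.mp h0
    intro t ht
    rw [← ha]
    simp
  · intro t ht
    set s : Polynomial ℝ := Polynomial.C (T/2) * (Polynomial.X + Polynomial.C 1) with hsdef
    have hT2 : T / 2 ≠ 0 := by positivity
    have hsdeg : s.natDegree = 1 := by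
      rw [hsdef, Polynomial.natDegree_C_mul hT2, Polynomial.natDegree_X_add_C]
    set q := p.comp s with hqdef
    have hqdeg : q.natDegree ≤ d := by
      rw [hqdef, Polynomial.natDegree_comp, hsdeg, mul_one]
      exact hdeg
    have hqb : ∀ x ∈ Set.Icc (-1 : ℝ) 1, |q.eval x| ≤ C := by
      intro x hx
      rw [hqdef, Polynomial.eval_comp]
      have hsx : s.eval x = T/2 * (x + 1) := by simp [hsdef]
      rw [hsx]
      refine hb _ ⟨?_, ?_⟩
      · nlinarith [hx.1, hx.2]
      · nlinarith [hx.1, hx.2]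
    have hmark := markov_neg_one_one d hd q hqdeg C hqb
    set x : ℝ := 2 * t / T - 1 with hxdef
    have h1 : 0 ≤ 2 * t / T := div_nonneg (by linarith [ht.1]) hT.le
    have h2 : 2 * t / T ≤ 2 := by
      rw [div_le_iff₀ hT]
      linarith [ht.2]
    have hx : x ∈ Set.Icc (-1 : ℝ) 1 := ⟨by rw [hxdef]; linarith, by rw [hxdef]; linarith⟩
    have hder := hmark x hx
    have hqd : (Polynomial.derivative q).eval x = T/2 * (Polynomial.derivative p).eval t := by
      rw [hqdef, Polynomial.derivative_comp, Polynomial.eval_mul, Polynomial.eval_comp]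
      have hds : (Polynomial.derivative s).eval x = T/2 := by
        simp [hsdef]
      have hsx : s.eval x = t := by
        simp only [hsdef, hxdef]
        simp
        field_simp
      rw [hds, hsx]
    rw [hqd, abs_mul, abs_of_pos (by positivity : (0:ℝ) < T/2)] at hder
    rw [div_mul_eq_mul_div, le_div_iff₀ hT]
    nlinarith [hder]

end

/-- **Markov-brothers-type derivative bound.** Every real polynomial `φ` of degree
at most `d` that is bounded by `C` on `[0, T]` satisfies, for all `k : ℕ`,
`sup_{t ∈ [0,T]} |φ^{(k)}(t)| ≤ C * (2 d² / T)^k`. -/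
theorem polynomial_iterated_deriv_bound
    (p : Polynomial ℝ) (d : ℕ) (T C : ℝ) (hT : 0 < T) (hC : 0 < C)
    (hdeg : p.natDegree ≤ d)
    (hbound : ∀ t ∈ Set.Icc (0 : ℝ) T, |p.eval t| ≤ C) :
    ∀ k : ℕ, ∀ t ∈ Set.Icc (0 : ℝ) T,
      |iteratedDeriv k (fun x => p.eval x) t| ≤ C * (2 * (d : ℝ) ^ 2 / T) ^ k := by
  suffices H : ∀ k : ℕ, ∀ (p : Polynomial ℝ) (C : ℝ), 0 ≤ C → p.natDegree ≤ d →
      (∀ t ∈ Set.Icc (0 : ℝ) T, |p.eval t| ≤ C) →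
      ∀ t ∈ Set.Icc (0 : ℝ) T,
        |iteratedDeriv k (fun x => p.eval x) t| ≤ C * (2 * (d : ℝ) ^ 2 / T) ^ k by
    intro k t ht
    exact H k p C hC.le hdeg hbound t ht
  intro k
  induction k with
  | zero =>
    intro p C hC0 hdeg' hb t ht
    simpa [iteratedDeriv_zero] using hb t ht
  | succ k ih =>
    intro p C hC0 hdeg' hb t ht
    rw [iteratedDeriv_succ']
    have hder : deriv (fun x => p.eval x) = fun x => (Polynomial.derivative p).eval x := by
      funext x
      exact p.deriv
    rw [hder]
    have hstep := markov_step p d T C hT hC0 hdeg' hb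
    have hdeg'' : (Polynomial.derivative p).natDegree ≤ d :=
      le_trans (Polynomial.natDegree_derivative_le p) (by omega)
    have hnn : 0 ≤ 2 * (d : ℝ) ^ 2 / T * C := mul_nonneg (by positivity) hC0
    have hih := ih (Polynomial.derivative p) (2 * (d : ℝ) ^ 2 / T * C) hnn hdeg'' hstep t ht
    calc |iteratedDeriv k (fun x => (Polynomial.derivative p).eval x) t|
        ≤ 2 * (d : ℝ) ^ 2 / T * C * (2 * (d : ℝ) ^ 2 / T) ^ k := hih
      _ = C * (2 * (d : ℝ) ^ 2 / T) ^ (k + 1) := by ring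
end

section
/- Let 𝔇 be the L×L second-difference matrix (𝔇_{ii} = 2, 𝔇_{ij} = −1 for |i−j| = 1, 0 otherwise). For x ∈ ℝ^L with x₀ = x_{L+1} = 0 and S(θ) = ∑_{j=1}^L x_j e^{2ijθ}, if π/2 ≤ ν ≤ π then (π/8)·xᵀ𝔇x ≤ ∫₀^ν sin²(θ)|S(θ)|² dθ ≤ (π/4)·xᵀ𝔇x. -/
open Finset Matrix

noncomputable def fisherC (m : ℤ) : ℝ :=
  if m = 0 then 2 else if m.natAbs = 1 then -1 else 0

lemma fisher_integral_cos (m : ℤ) :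
    ∫ θ in (0:ℝ)..Real.pi, Real.cos (2*(m:ℝ)*θ) = if m = 0 then Real.pi else 0 := by
  rcases eq_or_ne m 0 with h | h
  · simp [h]
  · have hm : (m:ℝ) ≠ 0 := Int.cast_ne_zero.mpr h
    have h2 : (2*(m:ℝ)) ≠ 0 := mul_ne_zero two_ne_zero hm
    have hder : ∀ θ : ℝ, HasDerivAt (fun t => Real.sin (2*(m:ℝ)*t) / (2*(m:ℝ)))
        (Real.cos (2*(m:ℝ)*θ)) θ := by
      intro θ
      have h1 : HasDerivAt (fun t : ℝ => 2*(m:ℝ)*t) (2*(m:ℝ)) θ := by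
        simpa using (hasDerivAt_id θ).const_mul (2*(m:ℝ))
      have h2' := (Real.hasDerivAt_sin (2*(m:ℝ)*θ)).comp θ h1
      have h3 := h2'.div_const (2*(m:ℝ))
      simpa [mul_div_assoc, mul_div_cancel_right₀ _ h2] using h3
    rw [intervalIntegral.integral_eq_sub_of_hasDerivAt (fun θ _ => hder θ)
      ((Real.continuous_cos.comp (by fun_prop)).intervalIntegrable _ _)]
    have hs : Real.sin (2*(m:ℝ)*Real.pi) = 0 := by
      have : 2*(m:ℝ)*Real.pi = ((2*m : ℤ):ℝ)*Real.pi := by push_cast; ring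
      rw [this, Real.sin_int_mul_pi]
    simp [hs, h]

lemma fisher_integral_sin_sq_cos (m : ℤ) :
    ∫ θ in (0:ℝ)..Real.pi, Real.sin θ^2 * Real.cos (2*(m:ℝ)*θ)
      = Real.pi/4 * fisherC m := by
  have key : ∀ θ:ℝ, Real.sin θ^2 * Real.cos (2*(m:ℝ)*θ)
      = (1/2) * Real.cos (2*(m:ℝ)*θ) - (1/4) * Real.cos (2*((m+1:ℤ):ℝ)*θ)
        - (1/4) * Real.cos (2*((m-1:ℤ):ℝ)*θ) := by
    intro θ
    have h1 : Real.sin θ^2 = 1/2 - Real.cos (2*θ)/2 := Real.sin_sq_eq_half_sub θ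
    have h2 : Real.cos (2*((m+1:ℤ):ℝ)*θ)
        = Real.cos (2*(m:ℝ)*θ) * Real.cos (2*θ) - Real.sin (2*(m:ℝ)*θ) * Real.sin (2*θ) := by
      rw [show (2*((m+1:ℤ):ℝ)*θ) = 2*(m:ℝ)*θ + 2*θ by push_cast; ring, Real.cos_add]
    have h3 : Real.cos (2*((m-1:ℤ):ℝ)*θ)
        = Real.cos (2*(m:ℝ)*θ) * Real.cos (2*θ) + Real.sin (2*(m:ℝ)*θ) * Real.sin (2*θ) := by
      rw [show (2*((m-1:ℤ):ℝ)*θ) = 2*(m:ℝ)*θ - 2*θ by push_cast; ring, Real.cos_sub]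
    rw [h1, h2, h3]; ring
  rw [intervalIntegral.integral_congr (fun θ _ => key θ)]
  have hii : ∀ k : ℤ, IntervalIntegrable (fun θ : ℝ => Real.cos (2*(k:ℝ)*θ)) MeasureTheory.volume 0 Real.pi :=
    fun k => (Real.continuous_cos.comp (by fun_prop)).intervalIntegrable _ _
  rw [intervalIntegral.integral_sub (((hii m).const_mul _).sub ((hii (m+1)).const_mul _))
      ((hii (m-1)).const_mul _),
    intervalIntegral.integral_sub ((hii m).const_mul _) ((hii (m+1)).const_mul _),
    intervalIntegral.integral_const_mul, intervalIntegral.integral_const_mul,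
    intervalIntegral.integral_const_mul, fisher_integral_cos, fisher_integral_cos,
    fisher_integral_cos]
  rcases eq_or_ne m 0 with h0 | h0
  · subst h0; norm_num [fisherC]; ring
  rcases eq_or_ne m 1 with h1 | h1
  · subst h1; norm_num [fisherC]; ring
  rcases eq_or_ne m (-1) with h2 | h2
  · subst h2; norm_num [fisherC]; ring
  · have hn : m.natAbs ≠ 1 := by omega
    have ha : m + 1 ≠ 0 := by omega
    have hb : m - 1 ≠ 0 := by omega
    simp [fisherC, h0, h1, h2, ha, hb, hn]

lemma fisher_normsq (L : ℕ) (x : ℕ → ℝ) (θ : ℝ) :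
    ‖∑ j ∈ Finset.Icc 1 L, (x j : ℂ) * Complex.exp (2 * Complex.I * (j : ℂ) * (θ : ℂ))‖ ^ 2
    = ∑ j ∈ Finset.Icc 1 L, ∑ k ∈ Finset.Icc 1 L,
        x j * x k * Real.cos (2 * ((((j:ℤ) - (k:ℤ)) : ℤ) : ℝ) * θ) := by
  set z := ∑ j ∈ Finset.Icc 1 L, (x j : ℂ) * Complex.exp (2 * Complex.I * (j : ℂ) * (θ : ℂ))
    with hz
  have h1 : ‖z‖^2 = (z * (starRingEnd ℂ) z).re := by
    rw [Complex.mul_conj]; simp [Complex.sq_norm]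
  rw [h1, hz, map_sum, Finset.sum_mul_sum, Complex.re_sum]
  refine Finset.sum_congr rfl fun j hj => ?_
  rw [Complex.re_sum]
  refine Finset.sum_congr rfl fun k hk => ?_
  rw [_root_.map_mul, Complex.conj_ofReal, ← Complex.exp_conj]
  have hc : (starRingEnd ℂ) (2 * Complex.I * (k:ℂ) * (θ:ℂ)) = -(2 * Complex.I * (k:ℂ) * (θ:ℂ)) := by
    rw [show (2 * Complex.I * (k:ℂ) * (θ:ℂ)) = ((2*(k:ℝ)*θ : ℝ):ℂ) * Complex.I by push_cast; ring,
      _root_.map_mul, Complex.conj_ofReal, Complex.conj_I]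
    ring
  rw [hc]
  have hexp : Complex.exp (2 * Complex.I * (j:ℂ) * (θ:ℂ)) *
      Complex.exp (-(2 * Complex.I * (k:ℂ) * (θ:ℂ)))
      = Complex.exp (((2 * ((((j:ℤ) - (k:ℤ)) : ℤ) : ℝ) * θ : ℝ) : ℂ) * Complex.I) := by
    rw [← Complex.exp_add]; congr 1; push_cast; ring
  have h2 : (x j : ℂ) * Complex.exp (2 * Complex.I * (j:ℂ) * (θ:ℂ)) *
      ((x k : ℂ) * Complex.exp (-(2 * Complex.I * (k:ℂ) * (θ:ℂ))))
      = ((x j * x k : ℝ) : ℂ) *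
        Complex.exp (((2 * ((((j:ℤ) - (k:ℤ)) : ℤ) : ℝ) * θ : ℝ) : ℂ) * Complex.I) := by
    rw [Complex.ofReal_mul, ← hexp]; ring
  rw [h2, Complex.re_ofReal_mul, Complex.exp_ofReal_mul_I_re]

lemma fisher_symm (L : ℕ) (x : ℕ → ℝ) (θ : ℝ) :
    (∑ j ∈ Finset.Icc 1 L, (x j : ℂ) *
        Complex.exp (2 * Complex.I * (j:ℂ) * ((Real.pi - θ : ℝ) : ℂ)))
    = (starRingEnd ℂ) (∑ j ∈ Finset.Icc 1 L, (x j : ℂ) *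
        Complex.exp (2 * Complex.I * (j:ℂ) * (θ:ℂ))) := by
  rw [_root_.map_sum]
  refine Finset.sum_congr rfl fun j hj => ?_
  rw [_root_.map_mul, Complex.conj_ofReal, ← Complex.exp_conj]
  congr 1
  have hc : (starRingEnd ℂ) (2 * Complex.I * (j:ℂ) * (θ:ℂ)) = -(2 * Complex.I * (j:ℂ) * (θ:ℂ)) := by
    rw [show (2 * Complex.I * (j:ℂ) * (θ:ℂ)) = ((2*(j:ℝ)*θ : ℝ):ℂ) * Complex.I by push_cast; ring,
      _root_.map_mul, Complex.conj_ofReal, Complex.conj_I]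
    ring
  rw [hc]
  calc Complex.exp (2 * Complex.I * (j:ℂ) * ((Real.pi - θ : ℝ) : ℂ))
      = Complex.exp ((j:ℂ) * (2 * (Real.pi:ℂ) * Complex.I) + -(2 * Complex.I * (j:ℂ) * (θ:ℂ))) := by
        congr 1; push_cast; ring
    _ = Complex.exp ((j:ℂ) * (2 * (Real.pi:ℂ) * Complex.I)) *
        Complex.exp (-(2 * Complex.I * (j:ℂ) * (θ:ℂ))) := Complex.exp_add _ _
    _ = Complex.exp (-(2 * Complex.I * (j:ℂ) * (θ:ℂ))) := by
        rw [Complex.exp_nat_mul, Complex.exp_two_pi_mul_I, one_pow, one_mul]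

lemma fisher_sum_Icc (L : ℕ) (h : ℕ → ℝ) :
    ∑ j ∈ Finset.Icc 1 L, h j = ∑ i : Fin L, h (i + 1) := by
  rw [← Finset.Ico_add_one_right_eq_Icc, Finset.sum_Ico_eq_sum_range]
  norm_num
  rw [← Fin.sum_univ_eq_sum_range (fun a => h (1 + a)) L]
  exact Finset.sum_congr rfl fun i _ => by rw [Nat.add_comm]

/-- Two-sided quadratic-form bound: for the second-difference matrix `𝔇` and
`S(θ) = ∑_{j=1}^L x_j e^{2ijθ}` (with `x₀ = x_{L+1} = 0`), if `π/2 ≤ ν ≤ π` then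
`(π/8) xᵀ𝔇x ≤ ∫₀^ν sin²θ |S(θ)|² dθ ≤ (π/4) xᵀ𝔇x`. -/
theorem fisher_quadratic_form_bounds (L : ℕ) (D : Matrix (Fin L) (Fin L) ℝ)
    (hD : ∀ i j : Fin L, D i j =
      if i = j then 2 else if ((i : ℤ) - (j : ℤ)).natAbs = 1 then -1 else 0)
    (x : ℕ → ℝ) (hx0 : x 0 = 0) (hxtop : x (L + 1) = 0)
    (ν : ℝ) (hν : ν ∈ Set.Icc (Real.pi / 2) Real.pi)
    (S : ℝ → ℂ)
    (hS : ∀ θ : ℝ, S θ = ∑ j ∈ Finset.Icc 1 L,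
      (x j : ℂ) * Complex.exp (2 * Complex.I * (j : ℂ) * (θ : ℂ))) :
    Real.pi / 8 * ((fun i : Fin L => x (i + 1)) ⬝ᵥ D.mulVec (fun i : Fin L => x (i + 1))) ≤
        (∫ θ in (0 : ℝ)..ν, Real.sin θ ^ 2 * ‖S θ‖ ^ 2) ∧
    (∫ θ in (0 : ℝ)..ν, Real.sin θ ^ 2 * ‖S θ‖ ^ 2) ≤
        Real.pi / 4 * ((fun i : Fin L => x (i + 1)) ⬝ᵥ D.mulVec (fun i : Fin L => x (i + 1))) := by
  obtain ⟨hν1, hν2⟩ := hν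
  have hπ := Real.pi_pos
  set f : ℝ → ℝ := fun θ =>
    Real.sin θ ^ 2 * ‖∑ j ∈ Finset.Icc 1 L,
      (x j : ℂ) * Complex.exp (2 * Complex.I * (j : ℂ) * (θ : ℂ))‖ ^ 2 with hfdef
  have hgoal : ∀ a b : ℝ, (∫ θ in a..b, Real.sin θ ^ 2 * ‖S θ‖ ^ 2) = ∫ θ in a..b, f θ := by
    intro a b
    refine intervalIntegral.integral_congr fun θ _ => ?_
    rw [hS θ]
  have hfc : Continuous f := by
    apply Continuous.mul (by fun_prop)
    apply Continuous.pow
    apply Continuous.norm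
    exact continuous_finset_sum _ fun j _ => by fun_prop
  have hfint : ∀ a b : ℝ, IntervalIntegrable f MeasureTheory.volume a b :=
    fun a b => hfc.intervalIntegrable a b
  have hfnn : ∀ θ, 0 ≤ f θ := fun θ => by positivity
  -- quadratic form as Icc double sum
  set Q : ℝ := (fun i : Fin L => x (i + 1)) ⬝ᵥ D.mulVec (fun i : Fin L => x (i + 1)) with hQdef
  have hQ : Q = ∑ j ∈ Finset.Icc 1 L, ∑ k ∈ Finset.Icc 1 L,
      x j * x k * fisherC ((j:ℤ) - (k:ℤ)) := by
    have hDc : ∀ i j : Fin L, D i j = fisherC ((i:ℤ) - (j:ℤ)) := by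
      intro i j
      rw [hD]
      unfold fisherC
      by_cases h : i = j
      · simp [h]
      · have h' : ¬ ((i:ℤ) - (j:ℤ) = 0) := by
          rw [sub_eq_zero]
          exact fun hh => h (Fin.ext (by exact_mod_cast hh))
        simp [h, h']
    rw [fisher_sum_Icc L]
    have hinner : ∀ i : Fin L,
        (∑ k ∈ Finset.Icc 1 L, x (↑i + 1) * x k * fisherC (((↑i + 1 : ℕ):ℤ) - (k:ℤ)))
        = ∑ k : Fin L, x (↑i + 1) * x (↑k + 1) * fisherC (((↑i + 1 : ℕ):ℤ) - ((↑k + 1 : ℕ):ℤ)) :=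
      fun i => fisher_sum_Icc L _
    calc Q = ∑ i : Fin L, x (↑i + 1) * ∑ k : Fin L, D i k * x (↑k + 1) := by
          rw [hQdef]; rfl
      _ = ∑ i : Fin L, ∑ k ∈ Finset.Icc 1 L,
            x (↑i + 1) * x k * fisherC (((↑i + 1 : ℕ):ℤ) - (k:ℤ)) := by
          refine Finset.sum_congr rfl fun i _ => ?_
          rw [hinner i, Finset.mul_sum]
          refine Finset.sum_congr rfl fun k _ => ?_
          rw [hDc i k]
          have harg : ((↑i + 1 : ℕ):ℤ) - ((↑k + 1 : ℕ):ℤ) = (i:ℤ) - (k:ℤ) := by push_cast; ring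
          rw [harg]; ring
      _ = ∑ i : Fin L, ∑ k ∈ Finset.Icc 1 L, x (↑i + 1) * x k * fisherC (((↑i + 1 : ℕ):ℤ) - (k:ℤ)) := rfl
  -- value of the full integral over [0, π]
  have hIπ : (∫ θ in (0:ℝ)..Real.pi, f θ) = Real.pi / 4 * Q := by
    have hfe : ∀ θ : ℝ, f θ = ∑ j ∈ Finset.Icc 1 L, ∑ k ∈ Finset.Icc 1 L,
        x j * x k * (Real.sin θ ^ 2 * Real.cos (2 * ((((j:ℤ) - (k:ℤ)) : ℤ) : ℝ) * θ)) := by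
      intro θ
      rw [hfdef]
      show Real.sin θ ^ 2 * ‖_‖ ^ 2 = _
      rw [fisher_normsq L x θ, Finset.mul_sum]
      refine Finset.sum_congr rfl fun j _ => ?_
      rw [Finset.mul_sum]
      exact Finset.sum_congr rfl fun k _ => by ring
    rw [intervalIntegral.integral_congr (fun θ _ => hfe θ)]
    rw [intervalIntegral.integral_finset_sum (fun j _ =>
      (Continuous.intervalIntegrable (by fun_prop) _ _))]
    rw [Finset.sum_congr rfl (fun j (_ : j ∈ Finset.Icc 1 L) =>
      intervalIntegral.integral_finset_sum (fun k _ =>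
        (Continuous.intervalIntegrable (by fun_prop) _ _)))]
    rw [hQ, Finset.mul_sum]
    refine Finset.sum_congr rfl fun j _ => ?_
    rw [Finset.mul_sum]
    refine Finset.sum_congr rfl fun k _ => ?_
    rw [intervalIntegral.integral_const_mul, fisher_integral_sin_sq_cos]
    ring
  -- symmetry about π/2
  have hptw : ∀ θ : ℝ, f (Real.pi - θ) = f θ := by
    intro θ
    rw [hfdef]
    show Real.sin (Real.pi - θ) ^ 2 * ‖_‖ ^ 2 = Real.sin θ ^ 2 * ‖_‖ ^ 2
    rw [Real.sin_pi_sub, fisher_symm L x θ, RCLike.norm_conj]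
  have hsymInt : (∫ θ in (0:ℝ)..(Real.pi/2), f θ) = ∫ θ in (Real.pi/2)..Real.pi, f θ := by
    have h1 := intervalIntegral.integral_comp_sub_left (a := Real.pi/2) (b := Real.pi) f Real.pi
    rw [intervalIntegral.integral_congr (fun θ _ => hptw θ)] at h1
    rw [show Real.pi - Real.pi = 0 by ring, show Real.pi - Real.pi/2 = Real.pi/2 by ring] at h1
    exact h1.symm
  have hsplit : (∫ θ in (0:ℝ)..(Real.pi/2), f θ) + (∫ θ in (Real.pi/2)..Real.pi, f θ)
      = ∫ θ in (0:ℝ)..Real.pi, f θ :=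
    intervalIntegral.integral_add_adjacent_intervals (hfint _ _) (hfint _ _)
  have hhalf : (∫ θ in (0:ℝ)..(Real.pi/2), f θ) = Real.pi / 8 * Q := by
    rw [hIπ] at hsplit; rw [← hsymInt] at hsplit; linarith
  have hae : ∀ c d : ℝ, 0 ≤ᵐ[MeasureTheory.volume.restrict (Set.Ioc c d)] f :=
    fun c d => Filter.Eventually.of_forall hfnn
  constructor
  · rw [hgoal, ← hhalf]
    exact intervalIntegral.integral_mono_interval (le_refl (0:ℝ)) (by positivity) hν1
      (hae _ _) (hfint _ _)
  · rw [hgoal, ← hIπ]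
    exact intervalIntegral.integral_mono_interval (le_refl (0:ℝ)) (by linarith) hν2
      (hae _ _) (hfint _ _)
end
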